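/- arXiv:1311.6698 — 4 statements merged into one kernel-verified Lean document; each statement's English description precedes it below -/
import Mathlib

section
/- Let X be a complex Banach space, D ⊆ B, and let h : D → X be ω-pseudo-contractive for some ω ∈ ℝ. Then D is dense in B if and only if for every x ∈ B one has lim_{α→0⁺} Φ_α(x) = x in the norm topology of X. -/
/-! For `y ∈ D` the point `x_α = (1 - αω)⁻¹ (y - α h y)` satisfies `Φ_α x_α = y`, and
`x_α → y` as `α → 0`. By the Schwarz lemma each `Φ_α ∈ Hol(B)` is `2 / (1 - ‖x‖)`-Lipschitz
at `x` on the ball of radius `1 - ‖x‖` around `x`, uniformly in `α`. Hence if `y ∈ D` is close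
to `x`, then `Φ_α x` is eventually close to `Φ_α x_α = y`, so `Φ_α x → x`. Conversely,
`Φ_α x ∈ D` converges to `x`. -/

open Filter Topology Metric Set

noncomputable section

/-- `J(x) = {x* ∈ X* : ⟨x, x*⟩ = ‖x‖² = ‖x*‖²}`. -/
def Jset {X : Type*} [NormedAddCommGroup X] [NormedSpace ℂ X] (x : X) :
    Set (X →L[ℂ] ℂ) :=
  {f | f x = ((‖x‖ ^ 2 : ℝ) : ℂ) ∧ ‖f‖ ^ 2 = ‖x‖ ^ 2}

/-- `Φ` is the Abel average `Φ_α = (I − αh)⁻¹ ∘ ((1 − αω)I)` of `h : D → X`: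
for every `x` in the unit ball `B`, `Φ x` is the unique `y ∈ D` with
`y − α h(y) = (1 − αω) x`. -/
def IsAbelAvg {X : Type*} [NormedAddCommGroup X] [NormedSpace ℂ X]
    (D : Set X) (h : X → X) (ω α : ℝ) (Φ : X → X) : Prop :=
  ∀ x ∈ ball (0 : X) 1,
    Φ x ∈ D ∧ Φ x - (α : ℂ) • h (Φ x) = (((1 - α * ω : ℝ) : ℂ)) • x ∧
      ∀ y ∈ D, y - (α : ℂ) • h y = (((1 - α * ω : ℝ) : ℂ)) • x → y = Φ x

/-- `h : D → X` is `ω`-pseudo-contractive: for some `δ > 0` and every `α ∈ (0, δ)`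
the Abel average `Φ_α` is well defined on all of `B` and lies in `Hol(B, D)`. -/
def PseudoContr {X : Type*} [NormedAddCommGroup X] [NormedSpace ℂ X]
    (D : Set X) (h : X → X) (ω : ℝ) : Prop :=
  ∃ δ > 0, ∀ α ∈ Set.Ioo (0 : ℝ) δ,
    ∃ Φ : X → X, IsAbelAvg D h ω α Φ ∧ DifferentiableOn ℂ Φ (ball (0 : X) 1)

/-- `h : D → X` is `ω`-dissipative. -/
def OmegaDissip {X : Type*} [NormedAddCommGroup X] [NormedSpace ℂ X]
    (D : Set X) (h : X → X) (ω : ℝ) : Prop :=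
  ∃ ε > 0, ∃ ς : ℝ, ∀ x ∈ D, 1 - ε < ‖x‖ → ‖x‖ < 1 →
    ∀ f ∈ Jset x, (f (h x)).re ≤ ω * ‖x‖ ^ 2 + ς * (1 - ‖x‖ ^ 2)

/-- `h` is closed in the weak topology on `D`. -/
def WeaklyClosedOn {X : Type*} [NormedAddCommGroup X] [NormedSpace ℂ X]
    (D : Set X) (h : X → X) : Prop :=
  ∀ (u : ℕ → X) (x y : X), (∀ n, u n ∈ D) → x ∈ D →
    Tendsto u atTop (nhds x) →
    (∀ f : X →L[ℂ] ℂ, Tendsto (fun n => f (h (u n))) atTop (nhds (f y))) →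
    h x = y

/-- `X` is weakly sequentially complete. -/
def WeaklySeqComplete (X : Type*) [NormedAddCommGroup X] [NormedSpace ℂ X] : Prop :=
  ∀ u : ℕ → X, (∀ f : X →L[ℂ] ℂ, ∃ c : ℂ, Tendsto (fun n => f (u n)) atTop (nhds c)) →
    ∃ y : X, ∀ f : X →L[ℂ] ℂ, Tendsto (fun n => f (u n)) atTop (nhds (f y))

/-- `h` has unit radius of boundedness. -/
def UnitRadiusBdd {X : Type*} [NormedAddCommGroup X] (h : X → X) : Prop :=
  ∀ r ∈ Set.Ioo (0 : ℝ) 1, ∃ M : ℝ, ∀ x : X, ‖x‖ ≤ r → ‖h x‖ ≤ M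

/-- The numerical radius `L(h) = limsup_{s→1⁻} sup Re N(h_s)` (valued in `EReal`). -/
def numRad {X : Type*} [NormedAddCommGroup X] [NormedSpace ℂ X] (h : X → X) : EReal :=
  Filter.limsup
    (fun s : ℝ =>
      sSup {r : EReal | ∃ (x : X) (f : X →L[ℂ] ℂ), ‖x‖ = 1 ∧ f ∈ Jset x ∧
        r = ((f (h ((s : ℂ) • x))).re : EReal)})
    (nhdsWithin (1 : ℝ) (Set.Ioo 0 1))

/-- `Q_ω = [0, 1/ω)` for `ω > 0`, `Q_0 = [0, ∞)`, `Q_ω = (−∞, 1/ω) ∪ [0, ∞)` for `ω < 0`. -/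
def Qset (ω : ℝ) : Set ℝ :=
  if 0 < ω then Set.Ico 0 (1 / ω)
  else if ω < 0 then Set.Iio (1 / ω) ∪ Set.Ici 0
  else Set.Ici 0

section AbelAvg

variable {X : Type*} [NormedAddCommGroup X] [NormedSpace ℂ X]

/-- The inverse `(1 - αω)⁻¹ (I - αh)` of the Abel average `Φ_α`. -/
def abelAvgInv (h : X → X) (ω α : ℝ) (y : X) : X :=
  ((1 - α * ω : ℝ) : ℂ)⁻¹ • (y - (α : ℂ) • h y)

theorem tendsto_abelAvgInv (h : X → X) (ω : ℝ) (y : X) :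
    Tendsto (fun α => abelAvgInv h ω α y) (𝓝 0) (𝓝 y) := by
  have : ContinuousAt (fun α : ℝ => abelAvgInv h ω α y) 0 := by
    unfold abelAvgInv
    fun_prop (disch := simp)
  simpa [abelAvgInv] using this.tendsto

theorem IsAbelAvg.apply_abelAvgInv {D : Set X} {h : X → X} {ω α : ℝ} {Φ : X → X}
    (hΦ : IsAbelAvg D h ω α Φ) {y : X} (hy : y ∈ D) (hαω : α * ω ≠ 1)
    (hyB : abelAvgInv h ω α y ∈ ball 0 1) :
    Φ (abelAvgInv h ω α y) = y := by
  refine ((hΦ _ hyB).2.2 y hy ?_).symm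
  have : ((1 - α * ω : ℝ) : ℂ) ≠ 0 := by exact_mod_cast sub_ne_zero.mpr hαω.symm
  rw [abelAvgInv, smul_inv_smul₀ this]

theorem eventually_apply_abelAvgInv {D : Set X} {h : X → X} {ω δ : ℝ} {Φ : ℝ → X → X}
    (hδ : 0 < δ) (hΦ : ∀ α ∈ Ioo 0 δ, IsAbelAvg D h ω α (Φ α)) {y : X} (hy : y ∈ D)
    (hyB : y ∈ ball 0 1) :
    ∀ᶠ α in 𝓝[>] 0, Φ α (abelAvgInv h ω α y) = y := by
  have hαω : ∀ᶠ α in 𝓝 (0 : ℝ), α * ω ≠ 1 :=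
    (continuous_id.mul continuous_const).continuousAt.eventually_ne (by simp)
  have hB := (tendsto_abelAvgInv h ω y).eventually (isOpen_ball.mem_nhds hyB)
  filter_upwards [Ioo_mem_nhdsGT hδ, nhdsWithin_le_nhds hαω, nhdsWithin_le_nhds hB]
    with α hα hne hαB
  exact (hΦ α hα).apply_abelAvgInv hy hne hαB

end AbelAvg

theorem dist_apply_le_of_mapsTo_unitBall {E F : Type*} [NormedAddCommGroup E]
    [NormedSpace ℂ E] [NormedAddCommGroup F] [NormedSpace ℂ F] {f : E → F}
    (hd : DifferentiableOn ℂ f (ball 0 1)) (hf : MapsTo f (ball 0 1) (ball 0 1))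
    {x z : E} (hz : dist z x < 1 - ‖x‖) :
    dist (f z) (f x) ≤ 2 / (1 - ‖x‖) * dist z x := by
  have hxz : ball x (1 - ‖x‖) ⊆ ball 0 1 := ball_subset_ball' (by simp)
  refine Complex.dist_le_div_mul_dist_of_mapsTo_ball (hd.mono hxz) (fun w hw => ?_) hz
  have h1 := mem_ball_zero_iff.mp (hf (hxz hw))
  have h2 := mem_ball_zero_iff.mp (hf (hxz (mem_ball_self ((dist_nonneg).trans_lt hz))))
  rw [mem_closedBall, dist_eq_norm]
  linarith [norm_sub_le (f w) (f x)]

theorem tendsto_apply_self_of_lipschitzAt_of_mem_closure {ι X : Type*} [PseudoMetricSpace X]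
    {l : Filter ι} {F : ι → X → X} {x : X} {ρ K : ℝ} (hρ : 0 < ρ)
    (hF : ∀ᶠ i in l, ∀ z ∈ ball x ρ, dist (F i z) (F i x) ≤ K * dist z x)
    (hx : x ∈ closure {y | ∃ p : ι → X, Tendsto p l (𝓝 y) ∧ ∀ᶠ i in l, F i (p i) = y}) :
    Tendsto (fun i => F i x) l (𝓝 x) := by
  refine Metric.tendsto_nhds.mpr fun ε hε => ?_
  have hdist : Tendsto (fun y => dist y x) (𝓝 x) (𝓝 0) :=
    (continuous_id.dist continuous_const).tendsto' x 0 (dist_self x)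
  have hdistK : Tendsto (fun y => (K + 1) * dist y x) (𝓝 x) (𝓝 0) := by
    simpa using hdist.const_mul (K + 1)
  obtain ⟨y, ⟨p, hp, hpy⟩, hyρ, hyε⟩ := ((mem_closure_iff_frequently.mp hx).and_eventually
    ((hdist.eventually_lt_const hρ).and (hdistK.eventually_lt_const hε))).exists
  have hpK : ∀ᶠ i in l, K * dist (p i) x + dist y x < ε := by
    refine (((hp.dist tendsto_const_nhds).const_mul K).add_const _).eventually_lt_const ?_
    linarith
  filter_upwards [hF, hpy, hpK, hp.eventually (isOpen_ball.mem_nhds (mem_ball.mpr hyρ))]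
    with i hFi hpi hKi hpρ
  calc dist (F i x) x ≤ dist (F i (p i)) (F i x) + dist y x := by
        rw [dist_comm _ (F i x), hpi]; exact dist_triangle _ _ _
    _ ≤ K * dist (p i) x + dist y x := by gcongr; exact hFi _ hpρ
    _ < ε := hKi

theorem stmt4_general {X : Type*} [NormedAddCommGroup X] [NormedSpace ℂ X]
    (D : Set X) (hDB : D ⊆ ball (0 : X) 1) (h : X → X) (ω : ℝ)
    (δ : ℝ) (hδ : 0 < δ) (Φ : ℝ → X → X)
    (hΦ : ∀ α ∈ Set.Ioo (0 : ℝ) δ,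
      IsAbelAvg D h ω α (Φ α) ∧ DifferentiableOn ℂ (Φ α) (ball (0 : X) 1)) :
    ball (0 : X) 1 ⊆ closure D ↔
      ∀ x ∈ ball (0 : X) 1,
        Tendsto (fun α : ℝ => Φ α x) (nhdsWithin 0 (Set.Ioi 0)) (nhds x) := by
  have hsmall : ∀ᶠ α in 𝓝[>] (0 : ℝ), α ∈ Ioo 0 δ := Ioo_mem_nhdsGT hδ
  refine ⟨fun hD x hx => ?_, fun hlim x hx => ?_⟩
  · have hlip : ∀ᶠ α in 𝓝[>] (0 : ℝ), ∀ z ∈ ball x (1 - ‖x‖),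
        dist (Φ α z) (Φ α x) ≤ 2 / (1 - ‖x‖) * dist z x := by
      filter_upwards [hsmall] with α hα z hz
      exact dist_apply_le_of_mapsTo_unitBall (hΦ α hα).2
        (fun w hw => hDB ((hΦ α hα).1 w hw).1) hz
    refine tendsto_apply_self_of_lipschitzAt_of_mem_closure (by simpa using hx) hlip
      (closure_mono (fun y hy => ?_) (hD hx))
    have hinv := (tendsto_abelAvgInv h ω y).mono_left (nhdsWithin_le_nhds (s := Ioi 0))
    exact ⟨_, hinv, eventually_apply_abelAvgInv hδ (fun α hα => (hΦ α hα).1) hy (hDB hy)⟩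
  · refine mem_closure_of_tendsto (hlim x hx) ?_
    filter_upwards [hsmall] with α hα
    exact ((hΦ α hα).1 x hx).1

/-- Lemma `D1lm`: for `h : D → X` `ω`-pseudo-contractive with Abel
averages `Φ_α`, `α ∈ (0, δ)`, the set `D` is dense in `B` iff `Φ_α(x) → x` as `α → 0⁺`
in the norm topology, for every `x ∈ B`. -/
theorem stmt4 {X : Type*} [NormedAddCommGroup X] [NormedSpace ℂ X] [CompleteSpace X]
    (D : Set X) (hDB : D ⊆ ball (0 : X) 1) (h : X → X) (ω : ℝ)
    (δ : ℝ) (hδ : 0 < δ) (Φ : ℝ → X → X)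
    (hΦ : ∀ α ∈ Set.Ioo (0 : ℝ) δ,
      IsAbelAvg D h ω α (Φ α) ∧ DifferentiableOn ℂ (Φ α) (ball (0 : X) 1)) :
    ball (0 : X) 1 ⊆ closure D ↔
      ∀ x ∈ ball (0 : X) 1,
        Tendsto (fun α : ℝ => Φ α x) (nhdsWithin 0 (Set.Ioi 0)) (nhds x) :=
  stmt4_general D hDB h ω δ hδ Φ hΦ

end
end

section
/- Let X be a complex Banach space, D ⊆ B dense in B, and let h : D → X be ω-pseudo-contractive for some ω ∈ ℝ, with δ > 0 as in the definition of ω-pseudo-contractivity. Then for every x ∈ B and every r ∈ (‖x‖, 1) there exists δ_r ∈ (0, δ) such that ‖Φ_α(x)‖ ≤ r for all α ∈ [0, δ_r]. -/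
open Filter Topology Metric Set

noncomputable section

/-!
Approximate `x ∈ B` by `y ∈ D`. By uniqueness in the definition of `Φ_α`, it sends
`v_α = (1 - αω)⁻¹ (y - α h y)` to `y`, and `v_α → y` as `α → 0`. As `Φ_α` is a holomorphic
self-map of `B`, the Schwarz lemma on `ball v_α (1 - ‖v_α‖)` gives
`‖Φ_α x - y‖ ≤ 2 ‖x - v_α‖ / (1 - ‖v_α‖)`, which is small once `y` is close to `x` and `α` is
small. Hence `Φ_α x → x` as `α → 0⁺`, so `‖Φ_α x‖ < r` for all small `α`.
-/

section Schwarz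

variable {E F : Type*} [NormedAddCommGroup E] [NormedSpace ℂ E]
  [NormedAddCommGroup F] [NormedSpace ℂ F]

/-- The Schwarz lemma on `ball c (1 - ‖c‖) ⊆ B`; the `2` bounds the diameter of `f '' B`. -/
theorem dist_le_div_mul_dist_of_mapsTo_unitBall {f : E → F} {c z : E}
    (hd : DifferentiableOn ℂ f (ball 0 1)) (hmaps : MapsTo f (ball 0 1) (ball 0 1))
    (hz : dist z c < 1 - ‖c‖) :
    dist (f z) (f c) ≤ 2 / (1 - ‖c‖) * dist z c := by
  have hsub : ball c (1 - ‖c‖) ⊆ ball (0 : E) 1 := ball_subset_ball' (by simp)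
  have hc : c ∈ ball (0 : E) 1 := hsub (mem_ball_self (dist_nonneg.trans_lt hz))
  refine Complex.dist_le_div_mul_dist_of_mapsTo_ball (hd.mono hsub) (fun w hw => ?_) hz
  have hw' := mem_ball_zero_iff.mp (hmaps (hsub hw))
  have hc' := mem_ball_zero_iff.mp (hmaps hc)
  rw [mem_closedBall, dist_eq_norm]
  linarith [norm_sub_le (f w) (f c)]

end Schwarz

section AbelAverage

variable {X : Type*} [NormedAddCommGroup X] [NormedSpace ℂ X]

def abelPreimage (h : X → X) (ω α : ℝ) (y : X) : X :=
  ((1 - α * ω : ℝ) : ℂ)⁻¹ • (y - (α : ℂ) • h y)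

theorem IsAbelAvg.apply_abelPreimage {D : Set X} {h : X → X} {ω α : ℝ} {Φ : X → X}
    (hΦ : IsAbelAvg D h ω α Φ) {y : X} (hy : y ∈ D) (hαω : α * ω ≠ 1)
    (hmem : abelPreimage h ω α y ∈ ball (0 : X) 1) :
    Φ (abelPreimage h ω α y) = y := by
  refine ((hΦ _ hmem).2.2 y hy ?_).symm
  have hc : ((1 - α * ω : ℝ) : ℂ) ≠ 0 := by exact_mod_cast sub_ne_zero.mpr hαω.symm
  rw [abelPreimage, smul_inv_smul₀ hc]

theorem tendsto_abelPreimage (h : X → X) (ω : ℝ) (y : X) :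
    Tendsto (fun α => abelPreimage h ω α y) (𝓝 0) (𝓝 y) := by
  have hcont : ContinuousAt (fun α : ℝ => abelPreimage h ω α y) 0 := by
    unfold abelPreimage
    refine ContinuousAt.smul ?_ (by fun_prop)
    exact (Complex.continuous_ofReal.comp (by fun_prop)).continuousAt.inv₀ (by simp)
  simpa [abelPreimage] using hcont.tendsto

variable {D : Set X} {h : X → X} {ω : ℝ} {Φ : ℝ → X → X}

theorem eventually_dist_abelAvg_lt (hDB : D ⊆ ball (0 : X) 1)
    (hΦ : ∀ᶠ α in 𝓝[>] 0,
      IsAbelAvg D h ω α (Φ α) ∧ DifferentiableOn ℂ (Φ α) (ball (0 : X) 1))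
    {x y : X} (hy : y ∈ D) (hxy : dist x y < 1 - ‖y‖) {K : ℝ}
    (hK : 2 / (1 - ‖y‖) * dist x y < K) :
    ∀ᶠ α in 𝓝[>] 0, dist (Φ α x) y < K := by
  have hy1 : ‖y‖ < 1 := mem_ball_zero_iff.mp (hDB hy)
  have hnear : ∀ᶠ w in 𝓝 y, dist x w < 1 - ‖w‖ ∧ 2 / (1 - ‖w‖) * dist x w < K := by
    have hden : ContinuousAt (fun w : X => 1 - ‖w‖) y := by fun_prop
    refine (ContinuousAt.eventually_lt (by fun_prop) hden hxy).and ?_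
    refine ContinuousAt.eventually_lt ?_ continuousAt_const hK
    exact ((continuousAt_const.div hden (by linarith)).mul (by fun_prop))
  have hαω : ∀ᶠ α : ℝ in 𝓝 0, α * ω ≠ 1 :=
    ContinuousAt.eventually_ne (by fun_prop) (by simp)
  filter_upwards [hΦ, nhdsWithin_le_nhds ((tendsto_abelPreimage h ω y).eventually hnear),
    nhdsWithin_le_nhds hαω] with α ⟨hA, hd⟩ ⟨hv, hvK⟩ hα
  have hvB : abelPreimage h ω α y ∈ ball (0 : X) 1 :=
    mem_ball_zero_iff.mpr (by linarith [dist_nonneg (x := x) (y := abelPreimage h ω α y)])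
  have hmaps : MapsTo (Φ α) (ball 0 1) (ball 0 1) := fun z hz => hDB (hA z hz).1
  calc dist (Φ α x) y
      = dist (Φ α x) (Φ α (abelPreimage h ω α y)) := by rw [hA.apply_abelPreimage hy hα hvB]
    _ ≤ 2 / (1 - ‖abelPreimage h ω α y‖) * dist x (abelPreimage h ω α y) :=
        dist_le_div_mul_dist_of_mapsTo_unitBall hd hmaps hv
    _ < K := hvK

theorem tendsto_abelAvg_nhdsGT (hDB : D ⊆ ball (0 : X) 1)
    (hdense : ball (0 : X) 1 ⊆ closure D)
    (hΦ : ∀ᶠ α in 𝓝[>] 0,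
      IsAbelAvg D h ω α (Φ α) ∧ DifferentiableOn ℂ (Φ α) (ball (0 : X) 1))
    {x : X} (hx : x ∈ ball (0 : X) 1) :
    Tendsto (fun α => Φ α x) (𝓝[>] 0) (𝓝 x) := by
  rw [Metric.tendsto_nhds]
  intro ε hε
  have hx1 : ‖x‖ < 1 := mem_ball_zero_iff.mp hx
  -- As `y → x`, the Schwarz bound `2 dist x y / (1 - ‖y‖)` tends to `0`.
  have hnear : ∀ᶠ y in 𝓝 x,
      dist x y < 1 - ‖y‖ ∧ 2 / (1 - ‖y‖) * dist x y < ε - dist y x := by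
    have hden : ContinuousAt (fun y : X => 1 - ‖y‖) x := by fun_prop
    refine (ContinuousAt.eventually_lt (by fun_prop) hden (by simpa using hx1)).and ?_
    refine ContinuousAt.eventually_lt ?_ (by fun_prop) (by simpa using hε)
    exact ((continuousAt_const.div hden (by linarith)).mul (by fun_prop))
  obtain ⟨y, ⟨hxy, hyK⟩, hy⟩ := mem_closure_iff_nhds.mp (hdense hx) _ hnear
  filter_upwards [eventually_dist_abelAvg_lt hDB hΦ hy hxy hyK] with α hα
  linarith [dist_triangle (Φ α x) y x]

end AbelAverage

theorem stmt5_general {X : Type*} [NormedAddCommGroup X] [NormedSpace ℂ X]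
    (D : Set X) (hDB : D ⊆ ball (0 : X) 1) (hdense : ball (0 : X) 1 ⊆ closure D)
    (h : X → X) (ω : ℝ)
    (δ : ℝ) (hδ : 0 < δ) (Φ : ℝ → X → X) (hΦ0 : ∀ x : X, Φ 0 x = x)
    (hΦ : ∀ α ∈ Set.Ioo (0 : ℝ) δ,
      IsAbelAvg D h ω α (Φ α) ∧ DifferentiableOn ℂ (Φ α) (ball (0 : X) 1)) :
    ∀ x ∈ ball (0 : X) 1, ∀ r ∈ Set.Ioo ‖x‖ 1,
      ∃ δr ∈ Set.Ioo (0 : ℝ) δ, ∀ α ∈ Set.Icc (0 : ℝ) δr, ‖Φ α x‖ ≤ r := by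
  intro x hx r hr
  have hΦev : ∀ᶠ α in 𝓝[>] 0,
      IsAbelAvg D h ω α (Φ α) ∧ DifferentiableOn ℂ (Φ α) (ball (0 : X) 1) :=
    mem_of_superset (Ioo_mem_nhdsGT hδ) hΦ
  have hnorm : ∀ᶠ α in 𝓝[>] 0, ‖Φ α x‖ < r :=
    (tendsto_abelAvg_nhdsGT hDB hdense hΦev hx).norm.eventually_lt_const hr.1
  obtain ⟨u, hu : 0 < u, hsub⟩ := mem_nhdsGT_iff_exists_Ioo_subset.mp hnorm
  refine ⟨min (u / 2) (δ / 2), ⟨by positivity, by linarith [min_le_right (u / 2) (δ / 2)]⟩,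
    fun α hα => ?_⟩
  rcases hα.1.eq_or_lt with rfl | hα0
  · simpa [hΦ0] using hr.1.le
  · exact (hsub ⟨hα0, by linarith [hα.2, min_le_left (u / 2) (δ / 2)]⟩).le

/-- Corollary `G1cor`: for `D ⊆ B` dense and `h : D → X`
`ω`-pseudo-contractive with Abel averages `Φ_α`, `α ∈ (0, δ)` (and `Φ_0 = I`), for every
`x ∈ B` and `r ∈ (‖x‖, 1)` there exists `δ_r ∈ (0, δ)` such that `‖Φ_α(x)‖ ≤ r` for all
`α ∈ [0, δ_r]`. -/
theorem stmt5 {X : Type*} [NormedAddCommGroup X] [NormedSpace ℂ X] [CompleteSpace X]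
    (D : Set X) (hDB : D ⊆ ball (0 : X) 1) (hdense : ball (0 : X) 1 ⊆ closure D)
    (h : X → X) (ω : ℝ)
    (δ : ℝ) (hδ : 0 < δ) (Φ : ℝ → X → X) (hΦ0 : ∀ x : X, Φ 0 x = x)
    (hΦ : ∀ α ∈ Set.Ioo (0 : ℝ) δ,
      IsAbelAvg D h ω α (Φ α) ∧ DifferentiableOn ℂ (Φ α) (ball (0 : X) 1)) :
    ∀ x ∈ ball (0 : X) 1, ∀ r ∈ Set.Ioo ‖x‖ 1,
      ∃ δr ∈ Set.Ioo (0 : ℝ) δ, ∀ α ∈ Set.Icc (0 : ℝ) δr, ‖Φ α x‖ ≤ r :=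
  stmt5_general D hDB hdense h ω δ hδ Φ hΦ0 hΦ

end
end

section
/- Let X be a complex Banach space, D ⊆ B balanced and dense in B, and let h : D → X be ω-pseudo-contractive for some ω ∈ ℝ. Suppose that for every x ∈ D the quotient (Φ_α(x) − x)/α converges in the weak topology of X to h(x) − ωx as α → 0⁺. Then h is ω-dissipative. -/
open Filter Topology Metric Set

noncomputable section

/-!
Restricting a holomorphic self-map `Φ` of the unit ball to the complex line through `x` and
composing with `f ∈ J(x)` gives a holomorphic self-map of the disc, so the Schwarz–Pick lemma
yields `Re f(Φ x) ≤ ‖x‖² + ‖Φ 0‖ (1 - ‖x‖²)`. For the Abel averages this reads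
`Re f((Φ_α x - x)/α) ≤ ‖Φ_α 0 / α‖ (1 - ‖x‖²)`. As `D` is balanced and nonempty, `0 ∈ D`, so
the vectors `Φ_α 0 / α` converge weakly along a sequence `αₙ → 0⁺` and are therefore bounded by
the uniform boundedness principle; letting `αₙ → 0⁺` gives `Re f(h x) - ω ‖x‖² ≤ M (1 - ‖x‖²)`.
-/

open ComplexConjugate

namespace Complex

lemma norm_sub_sq_eq (a w : ℂ) : ‖a - w‖ ^ 2 = ‖a‖ ^ 2 + ‖w‖ ^ 2 - 2 * (conj a * w).re := by
  simp only [Complex.sq_norm, normSq_apply, sub_re, sub_im, mul_re, conj_re, conj_im]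
  ring

lemma norm_one_sub_conj_mul_sq_eq (a w : ℂ) :
    ‖1 - conj a * w‖ ^ 2 = 1 + ‖a‖ ^ 2 * ‖w‖ ^ 2 - 2 * (conj a * w).re := by
  simp only [Complex.sq_norm, normSq_apply, sub_re, sub_im, mul_re, mul_im, conj_re, conj_im,
    one_re, one_im]
  ring

lemma norm_sub_lt_norm_one_sub_conj_mul {a w : ℂ} (ha : ‖a‖ < 1) (hw : ‖w‖ < 1) :
    ‖a - w‖ < ‖1 - conj a * w‖ := by
  have hsq : ‖a - w‖ ^ 2 < ‖1 - conj a * w‖ ^ 2 := by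
    rw [norm_sub_sq_eq, norm_one_sub_conj_mul_sq_eq]
    nlinarith [norm_nonneg a, norm_nonneg w, mul_pos (sub_pos.2 ha) (sub_pos.2 hw)]
  exact lt_of_pow_lt_pow_left₀ 2 (norm_nonneg _) hsq

/-- The Schwarz–Pick lemma, in the pseudo-hyperbolic form `ρ(g 0, g z) ≤ ‖z‖`. -/
theorem norm_sub_le_mul_norm_one_sub_conj_mul_of_mapsTo_ball {g : ℂ → ℂ}
    (hd : DifferentiableOn ℂ g (ball 0 1)) (hm : MapsTo g (ball 0 1) (ball 0 1)) {z : ℂ}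
    (hz : z ∈ ball (0 : ℂ) 1) :
    ‖g 0 - g z‖ ≤ ‖z‖ * ‖1 - conj (g 0) * g z‖ := by
  have ha : ‖g 0‖ < 1 := mem_ball_zero_iff.1 (hm (mem_ball_self one_pos))
  have hlt : ∀ w ∈ ball (0 : ℂ) 1, ‖g 0 - g w‖ < ‖1 - conj (g 0) * g w‖ := fun w hw =>
    norm_sub_lt_norm_one_sub_conj_mul ha (mem_ball_zero_iff.1 (hm hw))
  have hden : ∀ w ∈ ball (0 : ℂ) 1, 1 - conj (g 0) * g w ≠ 0 := fun w hw =>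
    norm_pos_iff.1 ((norm_nonneg _).trans_lt (hlt w hw))
  -- the Möbius map sending `g 0` to `0`, composed with `g`, satisfies the Schwarz lemma
  set G : ℂ → ℂ := fun w => (g 0 - g w) / (1 - conj (g 0) * g w)
  have hdG : DifferentiableOn ℂ G (ball 0 1) :=
    ((differentiableOn_const _).sub hd).div
      ((differentiableOn_const _).sub ((differentiableOn_const _).mul hd)) hden
  have hmG : MapsTo G (ball 0 1) (closedBall (G 0) 1) := by
    intro w hw
    simp only [G, sub_self, zero_div, mem_closedBall_zero_iff, norm_div]
    exact (div_lt_one ((norm_nonneg _).trans_lt (hlt w hw))).2 (hlt w hw) |>.le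
  have hschwarz := dist_le_div_mul_dist_of_mapsTo_ball hdG hmG hz
  simp only [G, sub_self, zero_div, dist_zero_right, div_one, one_mul, norm_div] at hschwarz
  rwa [div_le_iff₀ (norm_pos_iff.2 (hden z hz))] at hschwarz

/-- If `w` lies within pseudo-hyperbolic distance `t` of `a`, then `‖w‖ ≤ (t + ‖a‖)/(1 + t‖a‖)`,
which is at most `t + ‖a‖ (1 - t²)`. -/
lemma norm_le_add_mul_of_norm_sub_le {a w : ℂ} {t : ℝ} (ha : ‖a‖ ≤ 1) (hw : ‖w‖ ≤ 1)
    (ht₀ : 0 ≤ t) (ht₁ : t ≤ 1) (H : ‖a - w‖ ≤ t * ‖1 - conj a * w‖) :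
    ‖w‖ ≤ t + ‖a‖ * (1 - t ^ 2) := by
  set A := ‖a‖
  set W := ‖w‖
  set r := (conj a * w).re
  have hA₀ : 0 ≤ A := norm_nonneg a
  have hr : r ≤ A * W := by
    simpa [r, A, W, norm_mul] using re_le_norm (conj a * w)
  have hsq : A ^ 2 + W ^ 2 - 2 * r ≤ t ^ 2 * (1 + A ^ 2 * W ^ 2 - 2 * r) := by
    rw [← norm_sub_sq_eq, ← norm_one_sub_conj_mul_sq_eq, ← mul_pow]
    exact pow_le_pow_left₀ (norm_nonneg _) H 2
  have hAW : 0 ≤ 1 - A * W := by nlinarith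
  have hsq' : (W - A) ^ 2 ≤ (t * (1 - A * W)) ^ 2 := by
    nlinarith [mul_nonneg (sub_nonneg.2 hr) (by nlinarith : (0 : ℝ) ≤ 1 - t ^ 2)]
  have hlin : W - A ≤ t * (1 - A * W) := (abs_le_of_sq_le_sq' hsq' (mul_nonneg ht₀ hAW)).2
  nlinarith [mul_nonneg hA₀ ht₀, mul_nonneg (mul_nonneg (mul_nonneg hA₀ hA₀) ht₀)
    (sub_nonneg.2 (show t ^ 2 ≤ 1 by nlinarith))]

theorem norm_le_add_mul_of_mapsTo_ball {g : ℂ → ℂ} (hd : DifferentiableOn ℂ g (ball 0 1))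
    (hm : MapsTo g (ball 0 1) (ball 0 1)) {z : ℂ} (hz : z ∈ ball (0 : ℂ) 1) :
    ‖g z‖ ≤ ‖z‖ + ‖g 0‖ * (1 - ‖z‖ ^ 2) :=
  norm_le_add_mul_of_norm_sub_le (mem_ball_zero_iff.1 (hm (mem_ball_self one_pos))).le
    (mem_ball_zero_iff.1 (hm hz)).le (norm_nonneg z) (mem_ball_zero_iff.1 hz).le
    (norm_sub_le_mul_norm_one_sub_conj_mul_of_mapsTo_ball hd hm hz)

end Complex

section AbelAverage

variable {X : Type*} [NormedAddCommGroup X] [NormedSpace ℂ X]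

lemma norm_eq_of_mem_Jset {x : X} {f : X →L[ℂ] ℂ} (hf : f ∈ Jset x) : ‖f‖ = ‖x‖ :=
  (pow_left_inj₀ (norm_nonneg f) (norm_nonneg x) two_ne_zero).1 hf.2

lemma re_apply_le_of_mapsTo_ball {Φ : X → X} (hd : DifferentiableOn ℂ Φ (ball 0 1))
    (hm : MapsTo Φ (ball 0 1) (ball 0 1)) {x : X} (hx : ‖x‖ < 1) {f : X →L[ℂ] ℂ}
    (hf : f ∈ Jset x) :
    (f (Φ x)).re ≤ ‖x‖ ^ 2 + ‖Φ 0‖ * (1 - ‖x‖ ^ 2) := by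
  have hfx := norm_eq_of_mem_Jset hf
  rcases (norm_nonneg x).eq_or_lt with hx₀ | hx₀
  · rw [← hx₀] at hfx ⊢
    simp [norm_eq_zero.1 hfx]
  set s : ℂ := (‖x‖ : ℂ)
  set u : X := s⁻¹ • x
  have hs : ‖s‖ = ‖x‖ := by simp [s]
  have hs₀ : s ≠ 0 := norm_ne_zero_iff.1 (hs ▸ hx₀.ne')
  have hu : ‖u‖ = 1 := by simp [u, norm_smul, hs, hx₀.ne']
  have hline : MapsTo (fun ζ : ℂ => ζ • u) (ball 0 1) (ball 0 1) := fun ζ hζ => by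
    simpa [norm_smul, hu] using hζ
  set g : ℂ → ℂ := fun ζ => s⁻¹ * f (Φ (ζ • u))
  have hg : ∀ ζ, ‖g ζ‖ ≤ ‖Φ (ζ • u)‖ := fun ζ => by
    simp only [g, norm_mul, norm_inv, hs]
    rw [inv_mul_le_iff₀ hx₀, ← hfx]
    exact f.le_opNorm _
  have hdg : DifferentiableOn ℂ g (ball 0 1) :=
    (f.differentiable.comp_differentiableOn
      (hd.comp (differentiable_id.smul_const u).differentiableOn hline)).const_mul _
  have hmg : MapsTo g (ball 0 1) (ball 0 1) := fun ζ hζ =>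
    mem_ball_zero_iff.2 ((hg ζ).trans_lt (mem_ball_zero_iff.1 (hm (hline hζ))))
  have hsx : s • u = x := by simp [u, smul_smul, hs₀]
  have hfΦx : f (Φ x) = s * g s := by simp [g, hsx, hs₀]
  have hg0 : ‖g 0‖ ≤ ‖Φ 0‖ := by simpa using hg 0
  have hgs := Complex.norm_le_add_mul_of_mapsTo_ball hdg hmg (z := s) (by simpa [hs] using hx)
  rw [hs] at hgs
  have h1x : 0 ≤ 1 - ‖x‖ ^ 2 := by nlinarith
  calc (f (Φ x)).re = ‖x‖ * (g s).re := by rw [hfΦx, Complex.re_ofReal_mul]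
    _ ≤ ‖x‖ * ‖g s‖ := mul_le_mul_of_nonneg_left (Complex.re_le_norm _) hx₀.le
    _ ≤ ‖x‖ * (‖x‖ + ‖g 0‖ * (1 - ‖x‖ ^ 2)) := mul_le_mul_of_nonneg_left hgs hx₀.le
    _ ≤ ‖x‖ ^ 2 + ‖Φ 0‖ * (1 - ‖x‖ ^ 2) := by
      nlinarith [mul_le_mul_of_nonneg_right hg0 h1x,
        mul_nonneg (mul_nonneg (norm_nonneg (g 0)) h1x) (sub_nonneg.2 hx.le)]

lemma re_apply_inv_smul_sub_le_of_mapsTo_ball {Φ : X → X}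
    (hd : DifferentiableOn ℂ Φ (ball 0 1)) (hm : MapsTo Φ (ball 0 1) (ball 0 1)) {α : ℝ}
    (hα : 0 < α) {x : X} (hx : ‖x‖ < 1) {f : X →L[ℂ] ℂ} (hf : f ∈ Jset x) :
    (f ((α : ℂ)⁻¹ • (Φ x - x))).re ≤ ‖(α : ℂ)⁻¹ • Φ 0‖ * (1 - ‖x‖ ^ 2) := by
  have h := re_apply_le_of_mapsTo_ball hd hm hx hf
  rw [map_smul, map_sub, hf.1, smul_eq_mul, ← Complex.ofReal_inv, Complex.re_ofReal_mul,
    Complex.sub_re, Complex.ofReal_re, norm_smul, Complex.norm_real,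
    Real.norm_of_nonneg (inv_nonneg.2 hα.le), mul_assoc]
  exact mul_le_mul_of_nonneg_left (by linarith) (inv_nonneg.2 hα.le)

end AbelAverage

theorem exists_norm_le_of_forall_norm_apply_le {𝕜 E ι : Type*} [RCLike 𝕜]
    [NormedAddCommGroup E] [NormedSpace 𝕜 E] {u : ι → E}
    (hu : ∀ f : StrongDual 𝕜 E, ∃ C, ∀ i, ‖f (u i)‖ ≤ C) : ∃ M, ∀ i, ‖u i‖ ≤ M := by
  obtain ⟨M, hM⟩ := banach_steinhaus (g := fun i => NormedSpace.inclusionInDoubleDual 𝕜 E (u i))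
    (by simpa only [NormedSpace.dual_def] using hu)
  exact ⟨M, fun i => (NormedSpace.inclusionInDoubleDualLi 𝕜).norm_map (u i) ▸ hM i⟩

theorem stmt7_general {X : Type*} [NormedAddCommGroup X] [NormedSpace ℂ X]
    (D : Set X) (hDB : D ⊆ ball (0 : X) 1) (hdense : ball (0 : X) 1 ⊆ closure D)
    (hbal : Balanced ℂ D) (h : X → X) (ω : ℝ)
    (δ : ℝ) (hδ : 0 < δ) (Φ : ℝ → X → X)
    (hΦ : ∀ α ∈ Set.Ioo (0 : ℝ) δ,
      IsAbelAvg D h ω α (Φ α) ∧ DifferentiableOn ℂ (Φ α) (ball (0 : X) 1))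
    (hweak : ∀ x ∈ D, ∀ f : X →L[ℂ] ℂ,
      Tendsto (fun α : ℝ => f ((α : ℂ)⁻¹ • (Φ α x - x))) (nhdsWithin 0 (Set.Ioi 0))
        (nhds (f (h x - (ω : ℂ) • x)))) :
    OmegaDissip D h ω := by
  have hD0 : (0 : X) ∈ D :=
    hbal.zero_mem (closure_nonempty_iff.1 ⟨0, hdense (mem_ball_self one_pos)⟩)
  obtain ⟨a, -, ha, ha_lim⟩ := exists_seq_strictAnti_tendsto' hδ
  have ha_lim' : Tendsto a atTop (𝓝[>] 0) :=
    tendsto_nhdsWithin_iff.2 ⟨ha_lim, Eventually.of_forall fun n => (ha n).1⟩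
  have hΦa : ∀ n, DifferentiableOn ℂ (Φ (a n)) (ball 0 1) ∧
      MapsTo (Φ (a n)) (ball 0 1) (ball 0 1) := fun n =>
    ⟨(hΦ _ (ha n)).2, fun z hz => hDB ((hΦ _ (ha n)).1 z hz).1⟩
  obtain ⟨M, hM⟩ : ∃ M, ∀ n, ‖((a n : ℝ) : ℂ)⁻¹ • Φ (a n) 0‖ ≤ M := by
    refine exists_norm_le_of_forall_norm_apply_le (𝕜 := ℂ) fun f => ?_
    obtain ⟨C, hC⟩ := ((hweak 0 hD0 f).comp ha_lim').norm.bddAbove_range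
    exact ⟨C, fun n => by simpa using hC (mem_range_self n)⟩
  refine ⟨1, one_pos, M, fun x hx _ hx1 f hf => ?_⟩
  have hlim := (Complex.continuous_re.tendsto _).comp ((hweak x hx f).comp ha_lim')
  have hbound := le_of_tendsto hlim (Eventually.of_forall fun n =>
    (re_apply_inv_smul_sub_le_of_mapsTo_ball (hΦa n).1 (hΦa n).2 (ha n).1 hx1 hf).trans
      (mul_le_mul_of_nonneg_right (hM n) (by nlinarith [norm_nonneg x])))
  simp only [map_sub, map_smul, hf.1, Complex.sub_re, smul_eq_mul,
    ← Complex.ofReal_mul, Complex.ofReal_re] at hbound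
  linarith

/-- Lemma `H2lm`: if `D ⊆ B` is balanced and dense, `h : D → X` is
`ω`-pseudo-contractive with Abel averages `Φ_α`, and for every `x ∈ D` the quotient
`(Φ_α(x) − x)/α` converges weakly to `h(x) − ωx` as `α → 0⁺`, then `h` is
`ω`-dissipative. -/
theorem stmt7 {X : Type*} [NormedAddCommGroup X] [NormedSpace ℂ X] [CompleteSpace X]
    (D : Set X) (hDB : D ⊆ ball (0 : X) 1) (hdense : ball (0 : X) 1 ⊆ closure D)
    (hbal : Balanced ℂ D) (h : X → X) (ω : ℝ)
    (δ : ℝ) (hδ : 0 < δ) (Φ : ℝ → X → X)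
    (hΦ : ∀ α ∈ Set.Ioo (0 : ℝ) δ,
      IsAbelAvg D h ω α (Φ α) ∧ DifferentiableOn ℂ (Φ α) (ball (0 : X) 1))
    (hweak : ∀ x ∈ D, ∀ f : X →L[ℂ] ℂ,
      Tendsto (fun α : ℝ => f ((α : ℂ)⁻¹ • (Φ α x - x))) (nhdsWithin 0 (Set.Ioi 0))
        (nhds (f (h x - (ω : ℂ) • x)))) :
    OmegaDissip D h ω :=
  stmt7_general D hDB hdense hbal h ω δ hδ Φ hΦ hweak

end
end

section
/- Let X be a complex Banach space, h ∈ Hol(B, X) with h(0) = 0, ω ∈ ℝ, and α ∈ ℝ \ {0} with αω ≠ 1. Suppose that 1/α ∉ σ(h′(0)) and that the Abel average Φ_α is well defined and belongs to Hol(B). Then Φ_α(0) = 0, the Fréchet derivative of Φ_α at 0 is Φ_α′(0) = (1 − αω)(I − α h′(0))^{−1}, and σ(Φ_α′(0)) = ψ(σ(h′(0))), where ψ(ζ) = (1 − αω)/(1 − αζ). -/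
/-! Since `Φ 0 = 0` by uniqueness, differentiating `Φ x - α h(Φ x) = (1 - αω) x` at `0` gives
`(I - α h'(0)) Φ'(0) = (1 - αω) I`. As `1/α ∉ σ(h'(0))`, `I - α h'(0)` is invertible, so
`Φ'(0) = (1 - αω)(I - α h'(0))⁻¹`, and the spectral mapping follows from
`σ(I - αA) = 1 - α σ(A)`, `σ(T⁻¹) = σ(T)⁻¹` and `σ(cT) = c σ(T)`. -/

open Filter Topology Metric Set

noncomputable section

open scoped Pointwise

namespace spectrum

variable {𝕜 A : Type*} [Field 𝕜] [Ring A] [Algebra 𝕜 A]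

theorem smul_eq_smul_of_ne_zero {c : 𝕜} (hc : c ≠ 0) (a : A) :
    spectrum 𝕜 (c • a) = c • spectrum 𝕜 a :=
  unit_smul_eq_smul a (Units.mk0 c hc)

theorem one_sub_smul_eq {α : 𝕜} (hα : α ≠ 0) (a : A) :
    spectrum 𝕜 (1 - α • a) = (fun ζ => 1 - α * ζ) '' spectrum 𝕜 a := by
  rw [← map_one (algebraMap 𝕜 A), ← singleton_sub_eq, smul_eq_smul_of_ne_zero hα,
    ← Set.image_smul, Set.singleton_sub, Set.image_image]
  rfl

theorem isUnit_one_sub_smul {α : 𝕜} (hα : α ≠ 0) {a : A} (ha : α⁻¹ ∉ spectrum 𝕜 a) :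
    IsUnit (1 - α • a) := by
  rw [← zero_notMem_iff 𝕜, one_sub_smul_eq hα]
  rintro ⟨ζ, hζ, hζ0⟩
  obtain rfl : ζ = α⁻¹ := (inv_eq_of_mul_eq_one_right (sub_eq_zero.mp hζ0).symm).symm
  exact ha hζ

theorem smul_inv_one_sub_smul_eq {α c : 𝕜} (hα : α ≠ 0) (hc : c ≠ 0) {a : A} (u : Aˣ)
    (hu : (u : A) = 1 - α • a) :
    spectrum 𝕜 (c • (↑u⁻¹ : A)) = (fun ζ => c / (1 - α * ζ)) '' spectrum 𝕜 a := by
  rw [smul_eq_smul_of_ne_zero hc, ← spectrum.map_inv, hu, one_sub_smul_eq hα,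
    ← Set.image_inv_eq_inv, ← Set.image_smul, Set.image_image, Set.image_image]
  simp only [smul_eq_mul, div_eq_mul_inv]

end spectrum

namespace IsAbelAvg

variable {X : Type*} [NormedAddCommGroup X] [NormedSpace ℂ X] {D : Set X} {h Φ : X → X}
  {ω α : ℝ}

theorem map_zero (hΦ : IsAbelAvg D h ω α Φ) (h0D : 0 ∈ D) (h0 : h 0 = 0) : Φ 0 = 0 :=
  ((hΦ 0 (mem_ball_self one_pos)).2.2 0 h0D (by simp [h0])).symm

theorem one_sub_smul_fderiv_mul_fderiv (hΦ : IsAbelAvg D h ω α Φ) {x : X}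
    (hx : x ∈ ball (0 : X) 1) (hh : DifferentiableAt ℂ h (Φ x))
    (hΦx : DifferentiableAt ℂ Φ x) :
    (1 - (α : ℂ) • fderiv ℂ h (Φ x)) * fderiv ℂ Φ x = ((1 - α * ω : ℝ) : ℂ) • 1 := by
  have hlhs : HasFDerivAt (fun y => Φ y - (α : ℂ) • h (Φ y))
      ((1 - (α : ℂ) • fderiv ℂ h (Φ x)) * fderiv ℂ Φ x) x := by
    rw [sub_mul, one_mul, smul_mul_assoc]
    exact hΦx.hasFDerivAt.sub ((hh.hasFDerivAt.comp x hΦx.hasFDerivAt).const_smul _)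
  have heq : (fun y => Φ y - (α : ℂ) • h (Φ y)) =ᶠ[𝓝 x]
      fun y => ((1 - α * ω : ℝ) : ℂ) • y := by
    filter_upwards [isOpen_ball.mem_nhds hx] with y hy using (hΦ y hy).2.1
  exact (hlhs.congr_of_eventuallyEq heq.symm).unique
    (((1 - α * ω : ℝ) : ℂ) • (1 : X →L[ℂ] X)).hasFDerivAt

end IsAbelAvg

theorem stmt14_general {X : Type*} [NormedAddCommGroup X] [NormedSpace ℂ X]
    (h : X → X) (hhol : DifferentiableOn ℂ h (ball (0 : X) 1)) (h0 : h 0 = 0)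
    (ω α : ℝ) (hα : α ≠ 0) (hαω : α * ω ≠ 1)
    (hspec : ((α : ℂ)⁻¹) ∉ spectrum ℂ (fderiv ℂ h 0))
    (Φ : X → X) (hΦ : IsAbelAvg (ball (0 : X) 1) h ω α Φ)
    (hΦhol : DifferentiableOn ℂ Φ (ball (0 : X) 1)) :
    Φ 0 = 0 ∧
    ((ContinuousLinearMap.id ℂ X - (α : ℂ) • fderiv ℂ h 0).comp (fderiv ℂ Φ 0) =
      ((1 - α * ω : ℝ) : ℂ) • ContinuousLinearMap.id ℂ X) ∧
    ((fderiv ℂ Φ 0).comp (ContinuousLinearMap.id ℂ X - (α : ℂ) • fderiv ℂ h 0) =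
      ((1 - α * ω : ℝ) : ℂ) • ContinuousLinearMap.id ℂ X) ∧
    spectrum ℂ (fderiv ℂ Φ 0) =
      (fun ζ : ℂ => ((1 - α * ω : ℝ) : ℂ) / (1 - (α : ℂ) * ζ)) '' spectrum ℂ (fderiv ℂ h 0) := by
  have h0B : (0 : X) ∈ ball (0 : X) 1 := mem_ball_self one_pos
  have hΦ0 : Φ 0 = 0 := hΦ.map_zero h0B h0
  have hαC : (α : ℂ) ≠ 0 := Complex.ofReal_ne_zero.mpr hα
  have hc : ((1 - α * ω : ℝ) : ℂ) ≠ 0 := Complex.ofReal_ne_zero.mpr (sub_ne_zero.mpr hαω.symm)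
  have hmul := hΦ.one_sub_smul_fderiv_mul_fderiv h0B
    (hhol.differentiableAt (isOpen_ball.mem_nhds (by rwa [hΦ0])))
    (hΦhol.differentiableAt (isOpen_ball.mem_nhds h0B))
  rw [hΦ0] at hmul
  obtain ⟨u, hu⟩ := spectrum.isUnit_one_sub_smul hαC hspec
  have hΦ' : fderiv ℂ Φ 0 = ((1 - α * ω : ℝ) : ℂ) • ↑u⁻¹ := by
    rw [← u.inv_mul_cancel_left (fderiv ℂ Φ 0), hu, hmul, mul_smul_comm, mul_one]
  refine ⟨hΦ0, hmul, ?_, hΦ' ▸ spectrum.smul_inv_one_sub_smul_eq hαC hc u hu⟩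
  rw [← ContinuousLinearMap.one_def, ← ContinuousLinearMap.mul_def, hΦ', ← hu, smul_mul_assoc,
    u.inv_mul]

/-- from the proof of Theorem `3tm`: if `h ∈ Hol(B, X)`, `h(0) = 0`,
`1/α ∉ σ(h′(0))` and the Abel average `Φ_α ∈ Hol(B)`, then `Φ_α(0) = 0`,
`Φ_α′(0) = (1 − αω)(I − αh′(0))⁻¹`, and `σ(Φ_α′(0)) = ψ(σ(h′(0)))` with
`ψ(ζ) = (1 − αω)/(1 − αζ)`. -/
theorem stmt14 {X : Type*} [NormedAddCommGroup X] [NormedSpace ℂ X] [CompleteSpace X]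
    (h : X → X) (hhol : DifferentiableOn ℂ h (ball (0 : X) 1)) (h0 : h 0 = 0)
    (ω α : ℝ) (hα : α ≠ 0) (hαω : α * ω ≠ 1)
    (hspec : ((α : ℂ)⁻¹) ∉ spectrum ℂ (fderiv ℂ h 0))
    (Φ : X → X) (hΦ : IsAbelAvg (ball (0 : X) 1) h ω α Φ)
    (hΦhol : DifferentiableOn ℂ Φ (ball (0 : X) 1)) :
    Φ 0 = 0 ∧
    ((ContinuousLinearMap.id ℂ X - (α : ℂ) • fderiv ℂ h 0).comp (fderiv ℂ Φ 0) =
      ((1 - α * ω : ℝ) : ℂ) • ContinuousLinearMap.id ℂ X) ∧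
    ((fderiv ℂ Φ 0).comp (ContinuousLinearMap.id ℂ X - (α : ℂ) • fderiv ℂ h 0) =
      ((1 - α * ω : ℝ) : ℂ) • ContinuousLinearMap.id ℂ X) ∧
    spectrum ℂ (fderiv ℂ Φ 0) =
      (fun ζ : ℂ => ((1 - α * ω : ℝ) : ℂ) / (1 - (α : ℂ) * ζ)) '' spectrum ℂ (fderiv ℂ h 0) :=
  stmt14_general h hhol h0 ω α hα hαω hspec Φ hΦ hΦhol

end
end
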